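/- Let d ≥ 1, σ > d/2, t ∈ ℝ. Let f : ℤ^d × ℝ^d → ℂ with ‖f‖_{L²} < ∞, g : ℤ^d × ℝ^d → ℂ with Σ_k ∫ ⟨k⟩^(2σ)|g_k(η)|² dη < ∞, and h ∈ ℓ²(ℤ^d). Then there is a constant C depending only on d, σ with |Σ_{k,ℓ ∈ ℤ^d} ∫_{ℝ^d} f_k(η)·h_ℓ·g_{k-ℓ}(η - tℓ) dη| ≤ C·‖f‖_{L²}·(Σ_k ∫ ⟨k⟩^(2σ)|g_k(η)|² dη)^(1/2)·‖h‖_{ℓ²}. -/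

import Mathlib

/-!
By Cauchy–Schwarz in `η` and translation invariance of Lebesgue measure, each term is bounded by
`‖f_k‖₂ |h_ℓ| ‖g_{k-ℓ}‖₂`. Writing `k = m + ℓ`, Cauchy–Schwarz in `ℓ` (the `ℓ²` norm being
translation invariant) bounds the double sum of these by `(∑_m ‖g_m‖₂) ‖f‖ ‖h‖`. Finally
`∑_m ‖g_m‖₂ ≤ (∑_m ⟨|m|₁⟩^{-2σ})^{1/2} (∑_m ⟨|m|₁⟩^{2σ} ‖g_m‖₂²)^{1/2}`, and the first factor is
finite for `2σ > d` by comparison with the lattice sum `∑_{m ≠ 0} ‖m‖^{-2σ}`.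
-/

open MeasureTheory

/-- Japanese bracket. -/
noncomputable def jb (x : ℝ) : ℝ := Real.sqrt (1 + x ^ 2)

/-- ℓ¹ norm of an integer frequency vector. -/
noncomputable def znorm {d : ℕ} (k : Fin d → ℤ) : ℝ := ∑ i, |(k i : ℝ)|

theorem summable_norm_rpow_neg_of_card_lt {ι : Type*} [Fintype ι] {r : ℝ}
    (hr : (Fintype.card ι : ℝ) < r) : Summable fun m : ι → ℤ => ‖m‖ ^ (-r) := by
  let b := (Pi.basisFun ℝ ι).restrictScalars ℤ
  have hL := ZLattice.summable_norm_rpow (Submodule.span ℤ (Set.range (Pi.basisFun ℝ ι))) (-r)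
    (by rw [Module.finrank_eq_card_basis b]; linarith)
  refine (b.equivFun.symm.toEquiv.summable_iff.mpr hL).congr fun m => ?_
  have hcoe : ((b.equivFun.symm m : _) : ι → ℝ) = fun i => (m i : ℝ) := by
    ext i
    rw [← Pi.basisFun_repr ℝ ι (b.equivFun.symm m : ι → ℝ),
      ← Module.Basis.restrictScalars_repr_apply ℤ, ← b.equivFun_apply,
      b.equivFun.apply_symm_apply, eq_intCast]
  simp only [Function.comp_apply, LinearEquiv.coe_toEquiv, Submodule.coe_norm, hcoe, Pi.norm_def]
  rfl

theorem jb_pos (x : ℝ) : 0 < jb x :=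
  Real.sqrt_pos.mpr (by positivity)

theorem abs_le_jb (x : ℝ) : |x| ≤ jb x :=
  Real.abs_le_sqrt (by linarith)

theorem norm_le_znorm {d : ℕ} (m : Fin d → ℤ) : ‖m‖ ≤ znorm m :=
  (pi_norm_le_iff_of_nonneg (Finset.sum_nonneg fun _ _ => abs_nonneg _)).mpr fun i =>
    Finset.single_le_sum (f := fun j => |(m j : ℝ)|) (fun _ _ => abs_nonneg _)
      (Finset.mem_univ i)

theorem summable_jb_znorm_rpow_neg {d : ℕ} {r : ℝ} (hr : (d : ℝ) < r) :
    Summable fun m : Fin d → ℤ => jb (znorm m) ^ (-r) := by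
  refine (summable_norm_rpow_neg_of_card_lt (by simpa using hr)).of_norm_bounded_eventually ?_
  filter_upwards [Filter.eventually_cofinite_ne 0] with m hm
  rw [Real.norm_of_nonneg (Real.rpow_nonneg (jb_pos _).le _)]
  refine Real.rpow_le_rpow_of_nonpos (norm_pos_iff.mpr hm) ?_ (by linarith [d.cast_nonneg (α := ℝ)])
  exact (norm_le_znorm m).trans ((le_abs_self _).trans (abs_le_jb _))

theorem summable_and_tsum_mul_le_sqrt_mul_sqrt {ι : Type*} {a b : ι → ℝ} (ha : ∀ i, 0 ≤ a i)
    (hb : ∀ i, 0 ≤ b i) (ha2 : Summable fun i => a i ^ 2) (hb2 : Summable fun i => b i ^ 2) :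
    Summable (fun i => a i * b i) ∧
      ∑' i, a i * b i ≤ √(∑' i, a i ^ 2) * √(∑' i, b i ^ 2) := by
  simpa [Real.sqrt_eq_rpow] using
    Real.summable_and_inner_le_Lp_mul_Lq_tsum_of_nonneg Real.HolderConjugate.two_two ha hb
      (by simpa using ha2) (by simpa using hb2)

theorem summable_and_tsum_le_sqrt_tsum_inv_mul_sqrt_tsum_mul_sq {ι : Type*} {ω c : ι → ℝ}
    (hω : ∀ i, 0 < ω i) (hc : ∀ i, 0 ≤ c i) (hω_inv : Summable fun i => (ω i)⁻¹)
    (hωc : Summable fun i => ω i * c i ^ 2) :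
    Summable c ∧ ∑' i, c i ≤ √(∑' i, (ω i)⁻¹) * √(∑' i, ω i * c i ^ 2) := by
  have hsq_inv : ∀ i, (√(ω i))⁻¹ ^ 2 = (ω i)⁻¹ := fun i => by
    rw [inv_pow, Real.sq_sqrt (hω i).le]
  have hsq_mul : ∀ i, (√(ω i) * c i) ^ 2 = ω i * c i ^ 2 := fun i => by
    rw [mul_pow, Real.sq_sqrt (hω i).le]
  have hprod : ∀ i, (√(ω i))⁻¹ * (√(ω i) * c i) = c i := fun i =>
    inv_mul_cancel_left₀ (Real.sqrt_pos.mpr (hω i)).ne' _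
  simpa only [hsq_inv, hsq_mul, hprod] using
    summable_and_tsum_mul_le_sqrt_mul_sqrt (a := fun i => (√(ω i))⁻¹) (b := fun i => √(ω i) * c i)
      (fun i => inv_nonneg.mpr (Real.sqrt_nonneg (ω i)))
      (fun i => mul_nonneg (Real.sqrt_nonneg _) (hc i))
      (by simpa only [hsq_inv] using hω_inv) (by simpa only [hsq_mul] using hωc)

theorem summable_and_tsum_sqrt_integral_le {α E : Type*} [MeasurableSpace α] {μ : Measure α}
    [NormedAddCommGroup E] {d : ℕ} {σ : ℝ} (hσ : (d : ℝ) / 2 < σ) {g : (Fin d → ℤ) → α → E}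
    (hg : Summable fun m => ∫ x, jb (znorm m) ^ (2 * σ) * ‖g m x‖ ^ 2 ∂μ) :
    Summable (fun m => √(∫ x, ‖g m x‖ ^ 2 ∂μ)) ∧
      ∑' m, √(∫ x, ‖g m x‖ ^ 2 ∂μ) ≤ √(∑' m : Fin d → ℤ, jb (znorm m) ^ (-(2 * σ))) *
        √(∑' m, ∫ x, jb (znorm m) ^ (2 * σ) * ‖g m x‖ ^ 2 ∂μ) := by
  have hweight : ∀ m : Fin d → ℤ, (jb (znorm m) ^ (2 * σ))⁻¹ = jb (znorm m) ^ (-(2 * σ)) :=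
    fun m => (Real.rpow_neg (jb_pos _).le _).symm
  have hmass : ∀ m, jb (znorm m) ^ (2 * σ) * √(∫ x, ‖g m x‖ ^ 2 ∂μ) ^ 2 =
      ∫ x, jb (znorm m) ^ (2 * σ) * ‖g m x‖ ^ 2 ∂μ := fun m => by
    rw [integral_const_mul, Real.sq_sqrt (integral_nonneg fun x => by positivity)]
  have hcs := summable_and_tsum_le_sqrt_tsum_inv_mul_sqrt_tsum_mul_sq
    (ω := fun m => jb (znorm m) ^ (2 * σ)) (c := fun m => √(∫ x, ‖g m x‖ ^ 2 ∂μ))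
    (fun _ => Real.rpow_pos_of_pos (jb_pos _) _)
    (fun _ => Real.sqrt_nonneg _)
    (by simpa only [hweight] using summable_jb_znorm_rpow_neg (r := 2 * σ) (by linarith))
    (by simpa only [hmass] using hg)
  simp only [hmass] at hcs
  simpa only [hweight] using hcs

theorem summable_and_tsum_mul_mul_sub_le {G : Type*} [AddGroup G] {a b c : G → ℝ}
    (ha : ∀ k, 0 ≤ a k) (hb : ∀ k, 0 ≤ b k) (hc : ∀ k, 0 ≤ c k)
    (ha2 : Summable fun k => a k ^ 2) (hb2 : Summable fun k => b k ^ 2) (hc1 : Summable c) :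
    Summable (fun p : G × G => a p.1 * b p.2 * c (p.1 - p.2)) ∧
      ∑' p : G × G, a p.1 * b p.2 * c (p.1 - p.2) ≤
        (∑' m, c m) * (√(∑' k, a k ^ 2) * √(∑' k, b k ^ 2)) := by
  set S := √(∑' k, a k ^ 2) * √(∑' k, b k ^ 2) with hS
  have hinner : ∀ m, Summable (fun ℓ => a (m + ℓ) * b ℓ) ∧ ∑' ℓ, a (m + ℓ) * b ℓ ≤ S := by
    intro m
    have hshift : ∑' ℓ, a (m + ℓ) ^ 2 = ∑' k, a k ^ 2 :=
      (Equiv.addLeft m).tsum_eq (fun k => a k ^ 2)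
    have hshift_summable : Summable fun ℓ => a (m + ℓ) ^ 2 :=
      (Equiv.addLeft m).summable_iff (f := fun k => a k ^ 2) |>.mpr ha2
    rw [hS, ← hshift]
    exact summable_and_tsum_mul_le_sqrt_mul_sqrt (fun ℓ => ha (m + ℓ)) hb hshift_summable hb2
  let e : G × G ≃ G × G :=
    { toFun := fun q => (q.1 + q.2, q.2)
      invFun := fun p => (p.1 - p.2, p.2)
      left_inv := fun q => by simp
      right_inv := fun p => by simp }
  set N : G × G → ℝ := fun q => c q.1 * (a (q.1 + q.2) * b q.2)
  have hN_nonneg : 0 ≤ N := fun q => mul_nonneg (hc _) (mul_nonneg (ha _) (hb _))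
  have hN_inner : ∀ m, ∑' ℓ, N (m, ℓ) ≤ c m * S := fun m => by
    show ∑' ℓ, c m * (a (m + ℓ) * b ℓ) ≤ _
    rw [tsum_mul_left]
    exact mul_le_mul_of_nonneg_left (hinner m).2 (hc m)
  have hN : Summable N := (summable_prod_of_nonneg hN_nonneg).2
    ⟨fun m => (hinner m).1.mul_left (c m),
      (hc1.mul_right S).of_nonneg_of_le (fun m => tsum_nonneg fun ℓ => hN_nonneg _) hN_inner⟩
  have he : ∀ q, a (e q).1 * b (e q).2 * c ((e q).1 - (e q).2) = N q := fun q => by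
    simp only [e, N, Equiv.coe_fn_mk, add_sub_cancel_right]
    ring
  refine ⟨e.summable_iff.mp (hN.congr fun q => (he q).symm), ?_⟩
  calc ∑' p : G × G, a p.1 * b p.2 * c (p.1 - p.2) = ∑' q, N q := by
        rw [← e.tsum_eq]
        exact tsum_congr he
    _ = ∑' m, ∑' ℓ, N (m, ℓ) := hN.tsum_prod
    _ ≤ ∑' m, c m * S := hN.prod.tsum_le_tsum hN_inner (hc1.mul_right S)
    _ = (∑' m, c m) * S := tsum_mul_right

theorem norm_integral_mul_le_sqrt_mul_sqrt {α 𝕜 : Type*} [MeasurableSpace α] {μ : Measure α}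
    [RCLike 𝕜] {F G : α → 𝕜} (hF : MemLp F 2 μ) (hG : MemLp G 2 μ) :
    ‖∫ x, F x * G x ∂μ‖ ≤ √(∫ x, ‖F x‖ ^ 2 ∂μ) * √(∫ x, ‖G x‖ ^ 2 ∂μ) := by
  have hF' : MemLp F (ENNReal.ofReal 2) μ := by simpa using hF
  have hG' : MemLp G (ENNReal.ofReal 2) μ := by simpa using hG
  calc ‖∫ x, F x * G x ∂μ‖ ≤ ∫ x, ‖F x‖ * ‖G x‖ ∂μ := by
        simpa only [norm_mul] using norm_integral_le_integral_norm (fun x => F x * G x)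
    _ ≤ _ := by
        simpa [Real.sqrt_eq_rpow] using
          integral_mul_norm_le_Lp_mul_Lq Real.HolderConjugate.two_two hF' hG'

theorem norm_integral_mul_comp_sub_le {E 𝕜 : Type*} [NormedAddCommGroup E] [MeasurableSpace E]
    [BorelSpace E] {μ : Measure E} [μ.IsAddRightInvariant] [RCLike 𝕜] {F G : E → 𝕜}
    (hF : MemLp F 2 μ) (hG : MemLp G 2 μ) (v : E) :
    ‖∫ x, F x * G (x - v) ∂μ‖ ≤ √(∫ x, ‖F x‖ ^ 2 ∂μ) * √(∫ x, ‖G x‖ ^ 2 ∂μ) := by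
  rw [← integral_sub_right_eq_self (fun x => ‖G x‖ ^ 2) v]
  exact norm_integral_mul_le_sqrt_mul_sqrt hF
    (hG.comp_measurePreserving (measurePreserving_sub_right μ v))

theorem norm_tsum_tsum_le_of_norm_le {α β E : Type*} [NormedAddCommGroup E] [CompleteSpace E]
    {F : α × β → E} {M : α × β → ℝ} (hM : Summable M) (hFM : ∀ p, ‖F p‖ ≤ M p) :
    ‖∑' a, ∑' b, F (a, b)‖ ≤ ∑' p, M p := by
  rw [← (hM.of_norm_bounded hFM).tsum_prod]
  exact tsum_of_norm_bounded hM.hasSum hFM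

theorem stmt_9_general (d : ℕ) (σ : ℝ) (hσ : (d : ℝ) / 2 < σ) :
    ∃ C : ℝ, 0 < C ∧
      ∀ (t : ℝ) (f g : (Fin d → ℤ) → (Fin d → ℝ) → ℂ) (h : (Fin d → ℤ) → ℂ),
        (∀ k, MemLp (f k) 2 volume) →
        Summable (fun k => ∫ η : Fin d → ℝ, ‖f k η‖ ^ 2) →
        (∀ k, MemLp (g k) 2 volume) →
        Summable (fun k => ∫ η : Fin d → ℝ, jb (znorm k) ^ (2 * σ) * ‖g k η‖ ^ 2) →
        Summable (fun k => ‖h k‖ ^ 2) →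
        ‖∑' k : Fin d → ℤ, ∑' ℓ : Fin d → ℤ,
            ∫ η : Fin d → ℝ, f k η * h ℓ * g (k - ℓ) (fun i => η i - t * (ℓ i : ℝ))‖ ≤
          C * Real.sqrt (∑' k : Fin d → ℤ, ∫ η : Fin d → ℝ, ‖f k η‖ ^ 2) *
            Real.sqrt (∑' k : Fin d → ℤ,
              ∫ η : Fin d → ℝ, jb (znorm k) ^ (2 * σ) * ‖g k η‖ ^ 2) *
            Real.sqrt (∑' k : Fin d → ℤ, ‖h k‖ ^ 2) := by
  set K := √(∑' m : Fin d → ℤ, jb (znorm m) ^ (-(2 * σ)))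
  refine ⟨K + 1, by positivity, fun t f g h hf hf2 hg hg2 hh => ?_⟩
  set A := fun k => √(∫ η : Fin d → ℝ, ‖f k η‖ ^ 2)
  set B := fun m => √(∫ η : Fin d → ℝ, ‖g m η‖ ^ 2)
  have hA2 : ∀ k, A k ^ 2 = ∫ η : Fin d → ℝ, ‖f k η‖ ^ 2 := fun k =>
    Real.sq_sqrt (integral_nonneg fun η => by positivity)
  obtain ⟨hB, hB_le⟩ := summable_and_tsum_sqrt_integral_le hσ hg2
  obtain ⟨hM, hM_le⟩ := summable_and_tsum_mul_mul_sub_le (a := A) (b := fun ℓ => ‖h ℓ‖) (c := B)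
    (fun _ => Real.sqrt_nonneg _) (fun _ => norm_nonneg _) (fun _ => Real.sqrt_nonneg _)
    (by simpa only [hA2] using hf2) hh hB
  simp only [hA2] at hM_le
  have hpt : ∀ p : (Fin d → ℤ) × (Fin d → ℤ),
      ‖∫ η : Fin d → ℝ, f p.1 η * h p.2 * g (p.1 - p.2) (fun i => η i - t * (p.2 i : ℝ))‖ ≤
        A p.1 * ‖h p.2‖ * B (p.1 - p.2) := fun ⟨k, ℓ⟩ => by
    simp only [mul_right_comm _ (h ℓ), integral_mul_const, norm_mul]
    rw [mul_right_comm]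
    exact mul_le_mul_of_nonneg_right
      (norm_integral_mul_comp_sub_le (hf k) (hg (k - ℓ)) (fun i => t * (ℓ i : ℝ))) (norm_nonneg _)
  set SF := √(∑' k : Fin d → ℤ, ∫ η : Fin d → ℝ, ‖f k η‖ ^ 2)
  set SG := √(∑' k : Fin d → ℤ, ∫ η : Fin d → ℝ, jb (znorm k) ^ (2 * σ) * ‖g k η‖ ^ 2)
  set SH := √(∑' k : Fin d → ℤ, ‖h k‖ ^ 2)
  calc _ ≤ _ := norm_tsum_tsum_le_of_norm_le hM hpt
    _ ≤ (∑' m, B m) * (SF * SH) := hM_le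
    _ ≤ K * SG * (SF * SH) := by gcongr
    _ = K * SF * SG * SH := by ring
    _ ≤ (K + 1) * SF * SG * SH := by gcongr; linarith

theorem stmt_9 (d : ℕ) (hd : 1 ≤ d) (σ : ℝ) (hσ : (d : ℝ) / 2 < σ) :
    ∃ C : ℝ, 0 < C ∧
      ∀ (t : ℝ) (f g : (Fin d → ℤ) → (Fin d → ℝ) → ℂ) (h : (Fin d → ℤ) → ℂ),
        (∀ k, MemLp (f k) 2 volume) →
        Summable (fun k => ∫ η : Fin d → ℝ, ‖f k η‖ ^ 2) →
        (∀ k, MemLp (g k) 2 volume) →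
        Summable (fun k => ∫ η : Fin d → ℝ, jb (znorm k) ^ (2 * σ) * ‖g k η‖ ^ 2) →
        Summable (fun k => ‖h k‖ ^ 2) →
        ‖∑' k : Fin d → ℤ, ∑' ℓ : Fin d → ℤ,
            ∫ η : Fin d → ℝ, f k η * h ℓ * g (k - ℓ) (fun i => η i - t * (ℓ i : ℝ))‖ ≤
          C * Real.sqrt (∑' k : Fin d → ℤ, ∫ η : Fin d → ℝ, ‖f k η‖ ^ 2) *
            Real.sqrt (∑' k : Fin d → ℤ,
              ∫ η : Fin d → ℝ, jb (znorm k) ^ (2 * σ) * ‖g k η‖ ^ 2) *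
            Real.sqrt (∑' k : Fin d → ℤ, ‖h k‖ ^ 2) :=
  stmt_9_general d σ hσ
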